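/- arXiv:2112.14629 — 2 statements merged into one kernel-verified Lean document; each statement's English description precedes it below -/
import Mathlib

section
/- Assume that the continuum 𝔠 is a regular cardinal. Then there exists a set A ⊆ ω^ω (the Baire space) such that for every cofinite subset C ⊆ ω the image of A under the restriction map f_C : ω^ω → ω^C, f_C(x) = x↾C, is a Bernstein set in ω^C (with the product topology). -/
/-- A perfect set: nonempty, closed, with no isolated points. -/
def PerfectSet {X : Type*} [TopologicalSpace X] (P : Set X) : Prop :=
  Perfect P ∧ P.Nonempty

/-- A Bernstein set in a topological space: it meets, and its complement meets,
every perfect subset of the space. -/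
def IsBernstein {X : Type*} [TopologicalSpace X] (A : Set X) : Prop :=
  ∀ P : Set X, PerfectSet P → (A ∩ P).Nonempty ∧ (P \ A).Nonempty

/-!
Enumerate the pairs `(C, P)` with `C ⊆ ℕ` cofinite and `P ⊆ ω^C` perfect as `(Cᵢ, Pᵢ)`, `i < 𝔠`;
there are only `𝔠` of them since `ω^C` is second countable. Each `Pᵢ` has `𝔠` points, hence so
does its preimage `Qᵢ` under the restriction `fᵢ = f_{Cᵢ}`, while the fibres of `fᵢ` are countable
because `Cᵢ` is cofinite. By transfinite recursion pick `zᵢ ∈ Qᵢ` outside the `fᵢ`-fibres of the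
`xⱼ`, `j < i`, and `xᵢ ∈ Qᵢ` outside the `fⱼ`-fibres of the `zⱼ`, `j ≤ i`: fewer than `𝔠` countable
sets are avoided, and their union has size at most `|i| · ℵ₀ < 𝔠`. Then `A = {xᵢ}` works, as
`fᵢ xᵢ ∈ Pᵢ ∩ fᵢ[A]` and `fᵢ zᵢ ∈ Pᵢ \ fᵢ[A]`.
-/

universe u

open Set Function Cardinal TopologicalSpace

theorem mk_isClosed_le_continuum (X : Type*) [TopologicalSpace X] [SecondCountableTopology X] :
    #{s : Set X // IsClosed s} ≤ 𝔠 := by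
  let B := countableBasis X
  have : Countable B := (countable_countableBasis X).to_subtype
  let code : {s : Set X // IsClosed s} → Set B := fun s => {U | (U : Set X) ⊆ (s : Set X)ᶜ}
  have hcode : Injective code := by
    rintro ⟨s, hs⟩ ⟨t, ht⟩ hst
    have hcompl := (isBasis_countableBasis X).eq_of_forall_subset_iff
      hs.isOpen_compl ht.isOpen_compl fun U hU => Set.ext_iff.mp hst ⟨U, hU⟩
    simpa using hcompl
  calc #{s : Set X // IsClosed s} ≤ #(Set B) := mk_le_of_injective hcode
    _ = 2 ^ #B := mk_set
    _ ≤ 2 ^ ℵ₀ := power_le_power_left two_ne_zero (mk_le_aleph0_iff.mpr ‹_›)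
    _ = 𝔠 := two_power_aleph0

theorem PerfectSet.continuum_le_mk {X : Type*} [TopologicalSpace X]
    [IsCompletelyMetrizableSpace X] {P : Set X} (hP : PerfectSet P) : 𝔠 ≤ #P := by
  let _ := upgradeIsCompletelyMetrizable X
  obtain ⟨f, hfP, -, hf⟩ := hP.1.exists_nat_bool_injection hP.2
  simpa using lift_mk_le_lift_mk_of_injective
    (hf.codRestrict (s := P) fun b => hfP (mem_range_self b))

theorem countable_domRestrict_preimage_singleton {α β : Type*} [Countable β] {C : Set α}
    (hC : Cᶜ.Finite) (y : C → β) : (C.domRestrict ⁻¹' {y} : Set (α → β)).Countable := by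
  have : Finite ↥Cᶜ := hC.to_subtype
  refine (mapsTo_univ Cᶜ.domRestrict _).countable_of_injOn ?_ countable_univ
  intro x hx x' hx' hxx'
  funext a
  by_cases ha : a ∈ C
  · exact congrFun ((hx : C.domRestrict x = y).trans (hx' : C.domRestrict x' = y).symm) ⟨a, ha⟩
  · exact congrFun hxx' ⟨a, ha⟩

theorem continuum_le_mk_domRestrict_preimage {α β : Type*} [Nonempty β] (C : Set α)
    {P : Set (C → β)} (hP : 𝔠 ≤ #P) : 𝔠 ≤ #(C.domRestrict ⁻¹' P : Set (α → β)) :=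
  hP.trans <| mk_preimage_of_subset_range _ _ fun y _ =>
    Subtype.surjective_restrict (β := fun _ => β) (· ∈ C) y

theorem mk_iUnion_lt_continuum {α ι : Type u} {s : ι → Set α} (hι : #ι < 𝔠)
    (hs : ∀ i, (s i).Countable) : #(⋃ i, s i) < 𝔠 := by
  refine (mk_iUnion_le s).trans_lt (mul_lt_of_lt aleph0_le_continuum hι ?_)
  exact (ciSup_le' fun i => mk_le_aleph0_iff.mpr (hs i).to_subtype).trans_lt aleph0_lt_continuum

theorem exists_transfinite_seq {ι α : Type*} [LT ι] [WellFoundedLT ι]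
    {R : ∀ i : ι, (∀ j < i, α) → α → Prop} (h : ∀ i prev, ∃ a, R i prev a) :
    ∃ s : ι → α, ∀ i, R i (fun j _ => s j) (s i) := by
  choose step hstep using h
  refine ⟨wellFounded_lt.fix step, fun i => ?_⟩
  rw [wellFounded_lt.fix_eq]
  exact hstep i _

section SeparatingChoice

variable {ι X : Type u} {Y : ι → Type*} {f : ∀ i, X → Y i} {Q : ι → Set X}

variable (f Q) in
def IsSeparatingChoice [Preorder ι] (i : ι) (prev : ∀ j < i, X × X) (p : X × X) : Prop :=
  p.1 ∈ Q i ∧ p.2 ∈ Q i ∧ f i p.1 ≠ f i p.2 ∧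
    ∀ j (hj : j < i), f i (prev j hj).1 ≠ f i p.2 ∧ f j p.1 ≠ f j (prev j hj).2

theorem exists_isSeparatingChoice [Preorder ι] (hf : ∀ i y, (f i ⁻¹' {y}).Countable)
    (hQ : ∀ i, 𝔠 ≤ #(Q i)) (i : ι) (hi : #(Iio i) < 𝔠) (prev : ∀ j < i, X × X) :
    ∃ p, IsSeparatingChoice f Q i prev p := by
  let Z := ⋃ j : Iio i, f i ⁻¹' {f i (prev j j.2).1}
  have hZ : #Z < 𝔠 := mk_iUnion_lt_continuum hi fun j => hf _ _
  obtain ⟨z, hzQ, hzZ⟩ := sdiff_nonempty_of_mk_lt_mk (hZ.trans_le (hQ i))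
  let W := (⋃ j : Iio i, f j ⁻¹' {f j (prev j j.2).2}) ∪ f i ⁻¹' {f i z}
  have hW : #W < 𝔠 := (mk_union_le _ _).trans_lt <| add_lt_of_lt aleph0_le_continuum
    (mk_iUnion_lt_continuum hi fun j => hf _ _)
    ((mk_le_aleph0_iff.mpr (hf i (f i z)).to_subtype).trans_lt aleph0_lt_continuum)
  obtain ⟨x, hxQ, hxW⟩ := sdiff_nonempty_of_mk_lt_mk (hW.trans_le (hQ i))
  refine ⟨(x, z), hxQ, hzQ, fun h => hxW (Or.inr h), fun j hj => ⟨fun h => ?_, fun h => ?_⟩⟩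
  · exact hzZ (mem_iUnion.mpr ⟨⟨j, hj⟩, h.symm⟩)
  · exact hxW (Or.inl (mem_iUnion.mpr ⟨⟨j, hj⟩, h⟩))

theorem exists_separating_seq [LinearOrder ι] [WellFoundedLT ι]
    (hι : ∀ i : ι, #(Iio i) < 𝔠) (hf : ∀ i y, (f i ⁻¹' {y}).Countable) (hQ : ∀ i, 𝔠 ≤ #(Q i)) :
    ∃ x z : ι → X, (∀ i, x i ∈ Q i) ∧ (∀ i, z i ∈ Q i) ∧ ∀ i j, f i (x j) ≠ f i (z i) := by
  obtain ⟨s, hs⟩ := exists_transfinite_seq fun i => exists_isSeparatingChoice hf hQ i (hι i)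
  refine ⟨fun i => (s i).1, fun i => (s i).2, fun i => (hs i).1, fun i => (hs i).2.1,
    fun i j => ?_⟩
  rcases lt_trichotomy j i with hji | rfl | hij
  · exact ((hs i).2.2.2 j hji).1
  · exact (hs j).2.2.1
  · exact ((hs j).2.2.2 i hij).2

theorem exists_separating_family (hι : #ι ≤ 𝔠) (hf : ∀ i y, (f i ⁻¹' {y}).Countable)
    (hQ : ∀ i, 𝔠 ≤ #(Q i)) :
    ∃ x z : ι → X, (∀ i, x i ∈ Q i) ∧ (∀ i, z i ∈ Q i) ∧ ∀ i j, f i (x j) ≠ f i (z i) := by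
  rcases isEmpty_or_nonempty ι with hempty | hne
  · exact ⟨isEmptyElim, isEmptyElim, isEmptyElim, isEmptyElim, isEmptyElim⟩
  obtain ⟨g⟩ : Nonempty (ι ↪ (𝔠 : Cardinal.{u}).ord.ToType) := by
    rwa [← Cardinal.le_def, mk_ord_toType]
  have he : LeftInverse (invFun g) g := leftInverse_invFun g.injective
  obtain ⟨x, z, hx, hz, hxz⟩ := exists_separating_seq (f := fun a => f (invFun g a))
    (Q := fun a => Q (invFun g a)) (fun a => by simpa using mk_Iio_lt a (by simp))
    (fun a => hf _) (fun a => hQ _)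
  refine ⟨x ∘ g, z ∘ g, fun i => ?_, fun i => ?_, fun i j => ?_⟩
  · simpa only [comp_apply, he i] using hx (g i)
  · simpa only [comp_apply, he i] using hz (g i)
  · have hij := hxz (g i) (g j)
    rwa [he i] at hij

end SeparatingChoice

theorem mk_sigma_perfectSet_le_continuum :
    #(Σ C : {C : Set ℕ // Cᶜ.Finite}, {P : Set (C.1 → ℕ) // PerfectSet P}) ≤ 𝔠 := by
  rw [mk_sigma]
  calc (sum fun C : {C : Set ℕ // Cᶜ.Finite} => #{P : Set (C.1 → ℕ) // PerfectSet P})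
      ≤ sum fun _ : {C : Set ℕ // Cᶜ.Finite} => 𝔠 := sum_le_sum _ _ fun C =>
        (mk_subtype_mono fun P hP => hP.1.closed).trans (mk_isClosed_le_continuum _)
    _ = #{C : Set ℕ // Cᶜ.Finite} * 𝔠 := sum_const' _ _
    _ ≤ 𝔠 * 𝔠 := by
      gcongr
      simpa using mk_subtype_le (fun C : Set ℕ => Cᶜ.Finite)
    _ = 𝔠 := mul_eq_self aleph0_le_continuum

theorem stmt1_general :
    ∃ A : Set (ℕ → ℕ), ∀ C : Set ℕ, Cᶜ.Finite →
      IsBernstein ((fun (x : ℕ → ℕ) (c : C) => x c) '' A) := by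
  obtain ⟨x, z, hx, hz, hxz⟩ := exists_separating_family mk_sigma_perfectSet_le_continuum
    (f := fun k => k.1.1.domRestrict)
    (fun k => countable_domRestrict_preimage_singleton k.1.2)
    (fun k => continuum_le_mk_domRestrict_preimage _ (k.2.2.continuum_le_mk))
  refine ⟨range x, fun C hC P hP => ?_⟩
  let k : Σ C : {C : Set ℕ // Cᶜ.Finite}, {P : Set (C.1 → ℕ) // PerfectSet P} :=
    ⟨⟨C, hC⟩, ⟨P, hP⟩⟩
  refine ⟨⟨_, mem_image_of_mem _ (mem_range_self k), hx k⟩, ⟨_, hz k, ?_⟩⟩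
  rintro ⟨_, ⟨j, rfl⟩, hj⟩
  exact hxz k j hj

theorem stmt1 (hreg : Cardinal.continuum.IsRegular) :
    ∃ A : Set (ℕ → ℕ), ∀ C : Set ℕ, Cᶜ.Finite →
      IsBernstein ((fun (x : ℕ → ℕ) (c : C) => x c) '' A) :=
  stmt1_general
end

section
/- Let X and X₀ be Polish spaces and f : X → X₀ a continuous function whose image f[X], with the subspace topology, is a Polish space. Then for every Bernstein set A ⊆ X the image f[A] contains a set which is a Bernstein set in f[X]. -/
/-
A continuous surjection `g` of Polish spaces maps a Bernstein set `A` onto a set `T` meeting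
every perfect set `P`: the closed set `g⁻¹' P` is uncountable, so it contains a perfect set, which
`A` meets. Such a `T` contains a Bernstein set. Indeed, a perfect set contains continuum many
disjoint perfect sets, so it meets `T` in continuum many points, while there are only continuum
many perfect sets. A transfinite recursion therefore picks pairwise distinct points
`x (P, b) ∈ T ∩ P` for all perfect `P` and `b : Bool`, and `{x (P, true)}` is Bernstein.
-/

open Set Function Filter Topology Cardinal

universe u

theorem Cardinal.exists_injective_forall_mem_of_mk_le {J Y : Type u} {κ : Cardinal}
    (Q : J → Set Y) (hJ : #J ≤ κ) (hQ : ∀ j, κ ≤ #(Q j)) :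
    ∃ x : J → Y, Injective x ∧ ∀ j, x j ∈ Q j := by
  obtain ⟨r, _, hr⟩ := exists_ord_eq J
  -- `r` has order type `(#J).ord`, so its initial segments have fewer than `κ` elements.
  have hfresh : ∀ j (prev : {k // r k j} → Y), (Q j \ range prev).Nonempty := fun j prev =>
    sdiff_nonempty_of_mk_lt_mk <| mk_range_le.trans_lt <|
      (card_typein_lt j hr).trans_le (hJ.trans (hQ j))
  let x : J → Y := IsWellFounded.fix r fun j prev => (hfresh j fun k => prev k k.2).some
  have hx : ∀ j, x j ∈ Q j \ range (fun k : {k // r k j} => x k) := fun j => by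
    rw [show x j = _ from IsWellFounded.fix_eq r _ j]
    exact (hfresh j _).some_mem
  refine ⟨x, fun i j hij => ?_, fun j => (hx j).1⟩
  rcases trichotomous_of r i j with h | h | h
  · exact absurd ⟨⟨i, h⟩, hij⟩ (hx j).2
  · exact h
  · exact absurd ⟨⟨j, h⟩, hij.symm⟩ (hx i).2

instance Pi.perfectSpace {ι α : Type*} [TopologicalSpace α] [Infinite ι] [Nontrivial α] :
    PerfectSpace (ι → α) := by
  classical
  refine perfectSpace_iff_forall_not_isolated.2 fun x => ?_
  choose v hv using fun i => exists_ne (x i)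
  have hlim : Tendsto (fun i => update x i (v i)) cofinite (𝓝[≠] x) := by
    refine tendsto_nhdsWithin_iff.2 ⟨tendsto_pi_nhds.2 fun k => ?_, .of_forall fun i h => ?_⟩
    · refine tendsto_const_nhds.congr' ?_
      filter_upwards [eventually_cofinite_ne k] with i hi
      exact (update_of_ne hi.symm _ _).symm
    · exact hv i (by simpa using congrFun h i)
  exact hlim.neBot

theorem Continuous.perfect_range {Z Y : Type*} [TopologicalSpace Z] [CompactSpace Z]
    [PerfectSpace Z] [TopologicalSpace Y] [T2Space Y] {k : Z → Y} (hk : Continuous k)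
    (hinj : Injective k) : Perfect (range k) := by
  refine ⟨(isCompact_range hk).isClosed, ?_⟩
  rintro _ ⟨z, rfl⟩
  have : Tendsto k (𝓝[≠] z) (𝓝[≠] (k z) ⊓ 𝓟 (range k)) :=
    le_inf (hk.continuousWithinAt.tendsto_nhdsWithin fun _ h => hinj.ne h)
      (tendsto_principal.2 (.of_forall fun w => mem_range_self w))
  exact this.neBot

theorem mk_setOf_isClosed_le_continuum {Y : Type*} [TopologicalSpace Y]
    [SecondCountableTopology Y] : #{C : Set Y | IsClosed C} ≤ 𝔠 := by
  obtain ⟨b, hbc, -, hb⟩ := TopologicalSpace.exists_countable_basis Y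
  -- Closed sets are Borel, and the Borel σ-algebra is generated by the countable basis `b`.
  refine (mk_le_mk_of_subset fun C (hC : IsClosed C) => ?_).trans
    (MeasurableSpace.cardinal_measurableSet_le_continuum
      ((le_aleph0_iff_set_countable.2 hbc).trans aleph0_le_continuum))
  change @MeasurableSet Y (MeasurableSpace.generateFrom b) C
  rw [← hb.borel_eq_generateFrom, borel_eq_generateFrom_isClosed]
  exact MeasurableSpace.measurableSet_generateFrom hC

theorem PerfectSet.continuum_le_mk_inter {Y : Type u} [TopologicalSpace Y] [PolishSpace Y]
    {T P : Set Y} (hT : ∀ Q, PerfectSet Q → (T ∩ Q).Nonempty) (hP : PerfectSet P) :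
    𝔠 ≤ #↥(T ∩ P) := by
  let := TopologicalSpace.upgradeIsCompletelyMetrizable Y
  obtain ⟨g, hgP, hgc, hginj⟩ := hP.1.exists_nat_bool_injection hP.2
  let e : (ℕ → Bool) × (ℕ → Bool) ≃ₜ (ℕ → Bool) :=
    Homeomorph.sumArrowHomeomorphProdArrow.symm.trans
      (Homeomorph.piCongrLeft (Y := fun _ => Bool) Equiv.natSumNatEquivNat)
  -- The ranges of the slices `g (e (x, ·))` are disjoint perfect subsets of `P`.
  have hslice : ∀ x, ∃ y, g (e (x, y)) ∈ T := fun x => by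
    obtain ⟨_, hzT, y, rfl⟩ := hT _
      ⟨(hgc.comp (e.continuous.comp (Continuous.prodMk_right x))).perfect_range
        (hginj.comp (e.injective.comp (Prod.mk_right_injective x))), range_nonempty _⟩
    exact ⟨y, hzT⟩
  choose y hy using hslice
  calc 𝔠 = lift.{u} #(ℕ → Bool) := by simp
    _ ≤ lift.{0} #↥(T ∩ P) := lift_mk_le_lift_mk_of_injective
        (f := fun x => ⟨g (e (x, y x)), hy x, hgP (mem_range_self _)⟩)
        fun x x' h => (Prod.ext_iff.1 (e.injective (hginj (congrArg Subtype.val h)))).1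
    _ = #↥(T ∩ P) := lift_uzero _

theorem PerfectSet.not_countable {Y : Type u} [TopologicalSpace Y] [PolishSpace Y] {P : Set Y}
    (hP : PerfectSet P) : ¬P.Countable := fun h => by
  have := hP.continuum_le_mk_inter (T := univ) fun Q hQ => by simpa using hQ.2
  rw [univ_inter] at this
  exact (aleph0_lt_continuum.trans_le this).not_ge (le_aleph0_iff_set_countable.2 h)

theorem IsBernstein.image_inter_nonempty {X : Type*} {Y : Type u} [TopologicalSpace X]
    [SecondCountableTopology X] [TopologicalSpace Y] [PolishSpace Y] {g : X → Y}
    (hg : Continuous g) (hsurj : Surjective g) {A : Set X} (hA : IsBernstein A) {P : Set Y}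
    (hP : PerfectSet P) : (g '' A ∩ P).Nonempty := by
  have hunc : ¬(g ⁻¹' P).Countable := fun h =>
    hP.not_countable (image_preimage_eq P hsurj ▸ h.image g)
  obtain ⟨D, hD, hDne, hDP⟩ :=
    exists_perfect_nonempty_of_isClosed_of_not_countable (hP.1.closed.preimage hg) hunc
  obtain ⟨a, haA, haD⟩ := (hA D ⟨hD, hDne⟩).1
  exact ⟨g a, mem_image_of_mem g haA, hDP haD⟩

theorem exists_isBernstein_subset {Y : Type u} [TopologicalSpace Y] [PolishSpace Y] {T : Set Y}
    (hT : ∀ P, PerfectSet P → (T ∩ P).Nonempty) : ∃ S ⊆ T, IsBernstein S := by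
  have hJ : #({P : Set Y // PerfectSet P} × Bool) ≤ 𝔠 := by
    rw [mk_prod, lift_uzero]
    calc _ ≤ 𝔠 * 𝔠 := mul_le_mul'
          ((mk_le_mk_of_subset fun P (hP : PerfectSet P) => hP.1.closed).trans
            mk_setOf_isClosed_le_continuum)
          (by simpa using (nat_lt_continuum 2).le)
      _ = 𝔠 := continuum_mul_self
  obtain ⟨x, hxinj, hx⟩ := exists_injective_forall_mem_of_mk_le (fun j => T ∩ j.1.1) hJ
    fun j => j.1.2.continuum_le_mk_inter hT
  refine ⟨range fun P => x (P, true), range_subset_iff.2 fun P => (hx _).1, fun P hP => ?_⟩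
  refine ⟨⟨_, mem_range_self ⟨P, hP⟩, (hx (⟨P, hP⟩, true)).2⟩,
    x (⟨P, hP⟩, false), (hx (⟨P, hP⟩, false)).2, ?_⟩
  rintro ⟨Q, hQ⟩
  exact Bool.noConfusion (congrArg Prod.snd (hxinj hQ))

theorem stmt3_general {X X₀ : Type} [TopologicalSpace X] [PolishSpace X]
    [TopologicalSpace X₀]
    (f : X → X₀) (hf : Continuous f) (hPolish : PolishSpace ↥(Set.range f))
    (A : Set X) (hA : IsBernstein A) :
    ∃ S : Set ↥(Set.range f), IsBernstein S ∧ Subtype.val '' S ⊆ f '' A := by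
  obtain ⟨S, hST, hS⟩ := exists_isBernstein_subset fun P hP =>
    hA.image_inter_nonempty hf.rangeFactorization rangeFactorization_surjective hP
  refine ⟨S, hS, ?_⟩
  calc Subtype.val '' S ⊆ Subtype.val '' (rangeFactorization f '' A) := image_mono hST
    _ = f '' A := by rw [image_image]; rfl

theorem stmt3 {X X₀ : Type} [TopologicalSpace X] [PolishSpace X]
    [TopologicalSpace X₀] [PolishSpace X₀]
    (f : X → X₀) (hf : Continuous f) (hPolish : PolishSpace ↥(Set.range f))
    (A : Set X) (hA : IsBernstein A) :
    ∃ S : Set ↥(Set.range f), IsBernstein S ∧ Subtype.val '' S ⊆ f '' A :=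
  stmt3_general f hf hPolish A hA
end
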